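/- arXiv:2510.10997 — 3 statements merged into one kernel-verified Lean document; each statement's English description precedes it below -/
import Mathlib

section
/- The network formation game (J_N, 2^{D_N}, U) is a potential game if and only if the payoff functions U are conservative; that is, if and only if for all networks g ⊆ D_N and all dyads (i,j), (i',j') ∈ D_N: [U_i(τ_{ij}(g)) − U_i(g)] + [U_{i'}(τ_{i'j'}(τ_{ij}(g))) − U_{i'}(τ_{ij}(g))] = [U_{i'}(τ_{i'j'}(g)) − U_{i'}(g)] + [U_i(τ_{ij}(τ_{i'j'}(g))) − U_i(τ_{i'j'}(g))]. -/
/-- A dyad on `N` players: an ordered pair of distinct players. -/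
abbrev Dyad (N : ℕ) := {p : Fin N × Fin N // p.1 ≠ p.2}

/-- The switching map `τ_{ij}`: toggles the link `e` in the network `g`. -/
def toggle {N : ℕ} (g : Finset (Dyad N)) (e : Dyad N) : Finset (Dyad N) :=
  if e ∈ g then g.erase e else insert e g

/-- The network `(s_i, g_{−i})`: the network `g` with player `i`'s strategy replaced by
the set of out-neighbors `s` (all links with source `i` are removed and replaced by the
links from `i` to the members of `s`). -/
def setStrat {N : ℕ} (g : Finset (Dyad N)) (i : Fin N) (s : Finset (Fin N)) :
    Finset (Dyad N) :=
  g.filter (fun e => e.val.1 ≠ i) ∪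
    Finset.univ.filter (fun e : Dyad N => e.val.1 = i ∧ e.val.2 ∈ s)

/-- `Φ` is a potential of the network formation game with payoffs `U`:
`U_i(s_i, g_{−i}) − U_i(s_i', g_{−i}) = Φ(s_i, g_{−i}) − Φ(s_i', g_{−i})` for all
players `i`, networks `g`, and strategies `s_i, s_i'`. -/
def IsPotential {N : ℕ} (U : Fin N → Finset (Dyad N) → ℝ)
    (Φ : Finset (Dyad N) → ℝ) : Prop :=
  ∀ (i : Fin N) (g : Finset (Dyad N)) (s s' : Finset (Fin N)),
    U i (setStrat g i s) - U i (setStrat g i s') =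
      Φ (setStrat g i s) - Φ (setStrat g i s')

/-! Proposition 1 is the discrete Poincaré lemma on the cube `2^{D_N}`: toggling a link `e`
changes the payoff of its owner by a marginal `δ(g, e)`, and conservativity says that these
marginals form a closed 1-form, i.e. they sum to zero around every square face. A closed form
on the cube is exact: summing the marginals along a path from `∅` to `g` that adds the links of
`g` one at a time gives a well-defined `Φ g`, because any two orders of adding the links differ
by transpositions, each of which is a square. Conversely, every unilateral deviation of player
`i` is a sequence of toggles of links owned by `i`, so a potential in the toggle sense is a
potential of the game. -/

open scoped symmDiff

namespace Finset

variable {α : Type*} [DecidableEq α] {s : Finset α} {a : α}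

theorem symmDiff_singleton_of_notMem (h : a ∉ s) : s ∆ {a} = insert a s := by
  rw [(disjoint_singleton_right.2 h).symmDiff_eq_sup, sup_eq_union, union_comm,
    insert_eq]

theorem symmDiff_singleton_of_mem (h : a ∈ s) : s ∆ {a} = s.erase a := by
  rw [symmDiff_comm, symmDiff_of_le (singleton_subset_iff.2 h), sdiff_singleton_eq_erase]

end Finset

section MarginalPotential

variable {α β : Type*} [DecidableEq α]

/-- `F e g` is the payoff, at the network `g`, of the owner of the link `e`. -/
def marginal (F : α → Finset α → ℝ) (g : Finset α) (e : α) : ℝ :=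
  F e (g ∆ {e}) - F e g

def Conservative (F : α → Finset α → ℝ) : Prop :=
  ∀ (g : Finset α) (e e' : α),
    marginal F g e + marginal F (g ∆ {e}) e' = marginal F g e' + marginal F (g ∆ {e'}) e

def IsMarginalPotential (F : α → Finset α → ℝ) (Φ : Finset α → ℝ) : Prop :=
  ∀ (g : Finset α) (e : α), marginal F g e = Φ (g ∆ {e}) - Φ g

variable {F : α → Finset α → ℝ}

theorem IsMarginalPotential.conservative {Φ : Finset α → ℝ} (hΦ : IsMarginalPotential F Φ) :
    Conservative F := by
  intro g e e'
  rw [hΦ, hΦ, hΦ, hΦ, symmDiff_right_comm g {e'} {e}]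
  ring

/-- Conservativity with links added rather than toggled; adding a link already present
changes nothing, so no side condition is needed. -/
theorem Conservative.insert_comm (H : Conservative F) (s : Finset α) (a b : α) :
    (F a (insert a s) - F a s) + (F b (insert b (insert a s)) - F b (insert a s)) =
      (F b (insert b s) - F b s) + (F a (insert a (insert b s)) - F a (insert b s)) := by
  by_cases ha : a ∈ s
  · simp [Finset.insert_eq_of_mem ha,
      Finset.insert_eq_of_mem (Finset.mem_insert_of_mem ha)]
  by_cases hb : b ∈ s
  · simp [Finset.insert_eq_of_mem hb,
      Finset.insert_eq_of_mem (Finset.mem_insert_of_mem hb)]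
  by_cases hab : a = b
  · rw [hab]
  have hb' : b ∉ insert a s := by simp [hb, Ne.symm hab]
  have ha' : a ∉ insert b s := by simp [ha, hab]
  have := H s a b
  simp only [marginal, Finset.symmDiff_singleton_of_notMem, ha, hb, ha', hb',
    not_false_eq_true] at this
  exact this

/-- The sum of the marginals along the path that adds the links of `l` from last to first. -/
def pathSum (F : α → Finset α → ℝ) : List α → ℝ
  | [] => 0
  | e :: l => pathSum F l + (F e (insert e l.toFinset) - F e l.toFinset)

theorem Conservative.pathSum_perm (H : Conservative F) {l₁ l₂ : List α} (h : l₁.Perm l₂) :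
    pathSum F l₁ = pathSum F l₂ := by
  induction h with
  | nil => rfl
  | cons e h ih => rw [pathSum, pathSum, ih, List.toFinset_eq_of_perm _ _ h]
  | swap a b l =>
    simp only [pathSum, List.toFinset_cons]
    linarith [H.insert_comm l.toFinset a b]
  | trans _ _ ih₁ ih₂ => exact ih₁.trans ih₂

theorem Conservative.pathSum_toList_insert (H : Conservative F) {g : Finset α} {e : α}
    (he : e ∉ g) :
    pathSum F (insert e g).toList = pathSum F g.toList + (F e (insert e g) - F e g) := by
  rw [H.pathSum_perm (Finset.toList_insert he), pathSum, Finset.toList_toFinset]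

theorem Conservative.isMarginalPotential_pathSum (H : Conservative F) :
    IsMarginalPotential F (fun g => pathSum F g.toList) := by
  intro g e
  simp only [marginal]
  by_cases he : e ∈ g
  · have h := H.pathSum_toList_insert (Finset.notMem_erase e g)
    rw [Finset.insert_erase he] at h
    rw [Finset.symmDiff_singleton_of_mem he]
    linarith
  · rw [Finset.symmDiff_singleton_of_notMem he, H.pathSum_toList_insert he]
    ring

theorem IsMarginalPotential.sub_eq_of_forall_mem_symmDiff {owner : α → β}
    {U : β → Finset α → ℝ} {Φ : Finset α → ℝ} (hΦ : IsMarginalPotential (U ∘ owner) Φ)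
    {i : β} {g h : Finset α} (hgh : ∀ e ∈ g ∆ h, owner e = i) :
    U i h - U i g = Φ h - Φ g := by
  suffices key : ∀ D : Finset α, (∀ e ∈ D, owner e = i) →
      ∀ g, U i (g ∆ D) - U i g = Φ (g ∆ D) - Φ g by
    simpa only [symmDiff_symmDiff_cancel_left] using key _ hgh g
  intro D
  induction D using Finset.induction_on with
  | empty => simp [← Finset.bot_eq_empty]
  | insert e D he ih =>
    intro hD g
    have hei : owner e = i := hD e (Finset.mem_insert_self e D)
    have step := hΦ (g ∆ D) e
    simp only [marginal, Function.comp_apply, hei] at step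
    rw [← Finset.symmDiff_singleton_of_notMem he, ← symmDiff_assoc]
    linarith [ih (fun f hf => hD f (Finset.mem_insert_of_mem hf)) g]

end MarginalPotential

section NetworkGame

variable {N : ℕ}

theorem toggle_eq_symmDiff (g : Finset (Dyad N)) (e : Dyad N) : toggle g e = g ∆ {e} := by
  by_cases he : e ∈ g
  · rw [toggle, if_pos he, Finset.symmDiff_singleton_of_mem he]
  · rw [toggle, if_neg he, Finset.symmDiff_singleton_of_notMem he]

theorem mem_setStrat {g : Finset (Dyad N)} {i : Fin N} {s : Finset (Fin N)} {f : Dyad N} :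
    f ∈ setStrat g i s ↔ f ∈ g ∧ f.val.1 ≠ i ∨ f.val.1 = i ∧ f.val.2 ∈ s := by
  simp [setStrat]

/-- The strategy `s_i` of player `i` in the network `g`. -/
def outNeighbors (g : Finset (Dyad N)) (i : Fin N) : Finset (Fin N) :=
  (g.filter (fun f => f.val.1 = i)).image (fun f => f.val.2)

theorem mem_outNeighbors {g : Finset (Dyad N)} {f : Dyad N} :
    f.val.2 ∈ outNeighbors g f.val.1 ↔ f ∈ g := by
  simp only [outNeighbors, Finset.mem_image, Finset.mem_filter]
  constructor
  · rintro ⟨a, ⟨hag, ha₁⟩, ha₂⟩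
    rwa [Subtype.ext (Prod.ext ha₁ ha₂)] at hag
  · exact fun hf => ⟨f, ⟨hf, rfl⟩, rfl⟩

theorem setStrat_outNeighbors_of_forall_mem_symmDiff {g h : Finset (Dyad N)} {i : Fin N}
    (hgh : ∀ f ∈ g ∆ h, f.val.1 = i) : setStrat g i (outNeighbors h i) = h := by
  ext f
  rw [mem_setStrat]
  by_cases hfi : f.val.1 = i
  · subst hfi
    simp [mem_outNeighbors]
  · have hf : f ∈ g ↔ f ∈ h := by
      by_contra hne
      exact hfi (hgh f (Finset.mem_symmDiff.2 (by tauto)))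
    simp [hfi, hf]

theorem isPotential_iff_isMarginalPotential {U : Fin N → Finset (Dyad N) → ℝ}
    {Φ : Finset (Dyad N) → ℝ} :
    IsPotential U Φ ↔ IsMarginalPotential (fun e : Dyad N => U e.val.1) Φ := by
  constructor
  · intro hΦ g e
    have hown : ∀ f ∈ g ∆ (g ∆ {e}), f.val.1 = e.val.1 := by
      simp [symmDiff_symmDiff_cancel_left]
    have hg : ∀ f ∈ g ∆ g, f.val.1 = e.val.1 := by simp
    have h := hΦ e.val.1 g (outNeighbors (g ∆ {e}) e.val.1) (outNeighbors g e.val.1)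
    rwa [setStrat_outNeighbors_of_forall_mem_symmDiff hown,
      setStrat_outNeighbors_of_forall_mem_symmDiff hg] at h
  · intro hΦ i g s s'
    have hown : ∀ f ∈ setStrat g i s' ∆ setStrat g i s, f.val.1 = i := by
      intro f hf
      by_contra hfi
      simp [Finset.mem_symmDiff, mem_setStrat, hfi] at hf
    exact hΦ.sub_eq_of_forall_mem_symmDiff (owner := fun e : Dyad N => e.val.1) hown

end NetworkGame

theorem stmt_2_general (N : ℕ) (U : Fin N → Finset (Dyad N) → ℝ) :
    (∃ Φ : Finset (Dyad N) → ℝ, IsPotential U Φ) ↔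
    (∀ (g : Finset (Dyad N)) (e e' : Dyad N),
      (U e.val.1 (toggle g e) - U e.val.1 g) +
        (U e'.val.1 (toggle (toggle g e) e') - U e'.val.1 (toggle g e)) =
      (U e'.val.1 (toggle g e') - U e'.val.1 g) +
        (U e.val.1 (toggle (toggle g e') e) - U e.val.1 (toggle g e'))) := by
  simp only [toggle_eq_symmDiff, isPotential_iff_isMarginalPotential]
  change _ ↔ Conservative (fun e : Dyad N => U e.val.1)
  exact ⟨fun ⟨_, hΦ⟩ => hΦ.conservative,
    fun H => ⟨_, H.isMarginalPotential_pathSum⟩⟩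

/-- **Proposition 1.** The network formation game is a potential game if and only if
the payoff functions are conservative: for all networks `g` and dyads `(i,j)`, `(i',j')`,
the sum of the marginal utilities of changing the state of the two links is independent
of the order in which the changes are made. -/
theorem stmt_2 (N : ℕ) (hN : 2 ≤ N) (U : Fin N → Finset (Dyad N) → ℝ) :
    (∃ Φ : Finset (Dyad N) → ℝ, IsPotential U Φ) ↔
    (∀ (g : Finset (Dyad N)) (e e' : Dyad N),
      (U e.val.1 (toggle g e) - U e.val.1 g) +
        (U e'.val.1 (toggle (toggle g e) e') - U e'.val.1 (toggle g e)) =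
      (U e'.val.1 (toggle g e') - U e'.val.1 g) +
        (U e.val.1 (toggle (toggle g e') e) - U e.val.1 (toggle g e'))) :=
  stmt_2_general N U
end

section
/- The network formation game (J_N, 2^{D_N}, U) with structure values V (i.e. U_i(g) = Σ_{g'⊆g} V_i(g')) is a potential game if and only if for every nonempty structure g ⊆ D_N, all source nodes assign it the same value: V_i(g) = V_j(g) for all i, j ∈ J_src(g). In that case, writing V_0(g) for this common value, the function Φ(g) = Σ_{g' ⊆ g} V_0(g') is a potential of the game. -/
/-- The structure values of `U`, obtained by Möbius inversion. -/
noncomputable def mobiusV {N : ℕ} (U : Fin N → Finset (Dyad N) → ℝ)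
    (i : Fin N) (g : Finset (Dyad N)) : ℝ :=
  ∑ g' ∈ g.powerset, (-1 : ℝ) ^ (g \ g').card * U i g'

/-- Player `i` is a source node of the structure `g`: `i ∈ J_src(g)`. -/
def IsSource {N : ℕ} (i : Fin N) (g : Finset (Dyad N)) : Prop :=
  ∃ e ∈ g, e.val.1 = i

/-!
A function `Φ` is a potential exactly when each `U_i - Φ` depends only on `g_{-i}`, i.e. is
unchanged by adding links with source `i`. On the subset lattice, a set function has this
invariance iff its Möbius transform vanishes on every structure of which `i` is a source. So `Φ`
is a potential iff `V_i(g)` equals the Möbius transform of `Φ` at `g` for every source `i` of `g`.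
Conversely, the sum over subsets of the common values `V_0` has Möbius transform `V_0`, hence is a
potential.
-/

open Finset

namespace Finset

variable {α R : Type*} [DecidableEq α] [CommRing R]

noncomputable def mobius (f : Finset α → R) (s : Finset α) : R :=
  ∑ t ∈ s.powerset, (-1) ^ #(s \ t) * f t

lemma sum_powerset_neg_one_pow_card_eq_ite (s : Finset α) :
    ∑ t ∈ s.powerset, (-1 : R) ^ #t = if s = ∅ then 1 else 0 := by
  have := congrArg (Int.cast : ℤ → R) (sum_powerset_neg_one_pow_card (x := s))
  push_cast at this
  simpa [apply_ite (Int.cast : ℤ → R)] using this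

lemma sum_Icc_neg_one_pow_card_sdiff_left {t s : Finset α} (h : t ⊆ s) :
    ∑ u ∈ Icc t s, (-1 : R) ^ #(u \ t) = if t = s then 1 else 0 := by
  have hdisj : ∀ w ∈ (s \ t).powerset, Disjoint t w := fun w hw =>
    disjoint_of_subset_right (mem_powerset.mp hw) disjoint_sdiff
  rw [Icc_eq_image_powerset h, sum_image fun w hw w' hw' hww' => by
      rw [← union_sdiff_cancel_left (hdisj w hw), hww', union_sdiff_cancel_left (hdisj w' hw')]]
  rw [sum_congr rfl fun w hw => by rw [union_sdiff_cancel_left (hdisj w hw)],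
    sum_powerset_neg_one_pow_card_eq_ite]
  exact if_congr (sdiff_eq_empty_iff_subset.trans ⟨h.antisymm, fun hts => hts ▸ subset_rfl⟩)
    rfl rfl

lemma sum_Icc_neg_one_pow_card_sdiff_right {t s : Finset α} (h : t ⊆ s) :
    ∑ u ∈ Icc t s, (-1 : R) ^ #(s \ u) = if t = s then 1 else 0 := by
  have hsign : ∀ u ∈ Icc t s, (-1 : R) ^ #(s \ u) = (-1) ^ #(s \ t) * (-1) ^ #(u \ t) := by
    intro u hu
    obtain ⟨htu, hus⟩ := mem_Icc.mp hu
    have hcard : #(s \ t) = #(s \ u) + #(u \ t) := by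
      rw [card_sdiff_of_subset h, card_sdiff_of_subset hus, card_sdiff_of_subset htu]
      have := card_le_card htu; have := card_le_card hus; omega
    rw [hcard, pow_add, mul_assoc, ← pow_add, ← two_mul, pow_mul]
    simp
  rw [sum_congr rfl hsign, ← mul_sum, sum_Icc_neg_one_pow_card_sdiff_left h]
  split_ifs with hts <;> simp [hts]

theorem sum_powerset_mobius (f : Finset α → R) (s : Finset α) :
    ∑ t ∈ s.powerset, mobius f t = f s := by
  unfold mobius
  calc ∑ t ∈ s.powerset, ∑ u ∈ t.powerset, (-1 : R) ^ #(t \ u) * f u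
      = ∑ u ∈ s.powerset, ∑ t ∈ Icc u s, (-1 : R) ^ #(t \ u) * f u := by
        refine sum_comm' fun t u => ?_
        simp only [mem_powerset, mem_Icc]
        exact ⟨fun ⟨hts, hut⟩ => ⟨⟨hut, hts⟩, hut.trans hts⟩, fun ⟨⟨hut, hts⟩, _⟩ => ⟨hts, hut⟩⟩
    _ = ∑ u ∈ s.powerset, (if u = s then f u else 0) := by
        refine sum_congr rfl fun u hu => ?_
        rw [← sum_mul, sum_Icc_neg_one_pow_card_sdiff_left (mem_powerset.mp hu), ite_mul,
          one_mul, zero_mul]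
    _ = f s := by simp

theorem mobius_sum_powerset (V : Finset α → R) (s : Finset α) :
    mobius (fun s => ∑ t ∈ s.powerset, V t) s = V s := by
  unfold mobius
  calc ∑ u ∈ s.powerset, (-1 : R) ^ #(s \ u) * ∑ t ∈ u.powerset, V t
      = ∑ t ∈ s.powerset, ∑ u ∈ Icc t s, (-1 : R) ^ #(s \ u) * V t := by
        simp_rw [mul_sum]
        refine sum_comm' fun u t => ?_
        simp only [mem_powerset, mem_Icc]
        exact ⟨fun ⟨hus, htu⟩ => ⟨⟨htu, hus⟩, htu.trans hus⟩, fun ⟨⟨htu, hus⟩, _⟩ => ⟨hus, htu⟩⟩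
    _ = ∑ t ∈ s.powerset, (if t = s then V t else 0) := by
        refine sum_congr rfl fun t ht => ?_
        rw [← sum_mul, sum_Icc_neg_one_pow_card_sdiff_right (mem_powerset.mp ht), ite_mul,
          one_mul, zero_mul]
    _ = V s := by simp

lemma mobius_sub (f g : Finset α → R) (s : Finset α) :
    mobius (f - g) s = mobius f s - mobius g s := by
  simp only [mobius, Pi.sub_apply, mul_sub, sum_sub_distrib]

lemma mobius_eq_zero_of_forall_insert {f : Finset α → R} {a : α} {s : Finset α}
    (hf : ∀ t, f (insert a t) = f t) (ha : a ∈ s) : mobius f s = 0 := by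
  have has : a ∉ s.erase a := notMem_erase a s
  rw [← insert_erase ha, mobius, sum_powerset_insert has, ← sum_add_distrib]
  refine sum_eq_zero fun t ht => ?_
  have hat : a ∉ t := fun h => has (mem_powerset.mp ht h)
  rw [hf, insert_sdiff_of_notMem _ hat, insert_sdiff_insert, sdiff_insert_of_notMem has,
    card_insert_of_notMem fun h => has (mem_sdiff.mp h).1, pow_succ]
  ring

theorem forall_eq_filter_iff_mobius_eq_zero (f : Finset α → R) (p : α → Prop)
    [DecidablePred p] :
    (∀ s, f s = f (s.filter p)) ↔ ∀ s, (∃ a ∈ s, ¬p a) → mobius f s = 0 := by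
  constructor
  · rintro hf s ⟨a, has, hpa⟩
    refine mobius_eq_zero_of_forall_insert (fun t => ?_) has
    rw [hf, filter_insert, if_neg hpa, ← hf]
  · intro hf s
    rw [← sum_powerset_mobius f s, ← sum_powerset_mobius f (s.filter p)]
    refine (sum_subset (powerset_mono.mpr (filter_subset p s)) fun t hts htp => hf t ?_).symm
    obtain ⟨a, hat, hap⟩ := not_subset.mp (mt mem_powerset.mpr htp)
    exact ⟨a, hat, fun hpa => hap (mem_filter.mpr ⟨mem_powerset.mp hts hat, hpa⟩)⟩

end Finset

section Game

variable {N : ℕ}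

lemma IsSource.nonempty {i : Fin N} {g : Finset (Dyad N)} (h : IsSource i g) : g.Nonempty :=
  let ⟨e, he, _⟩ := h; ⟨e, he⟩

lemma isSource_iff_exists_not_ne {i : Fin N} {g : Finset (Dyad N)} :
    IsSource i g ↔ ∃ e ∈ g, ¬e.val.1 ≠ i := by
  simp only [IsSource, not_not]

lemma setStrat_empty (g : Finset (Dyad N)) (i : Fin N) :
    setStrat g i ∅ = g.filter (fun e => e.val.1 ≠ i) := by
  simp [setStrat]

lemma filter_setStrat (g : Finset (Dyad N)) (i : Fin N) (s : Finset (Fin N)) :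
    (setStrat g i s).filter (fun e => e.val.1 ≠ i) = g.filter (fun e => e.val.1 ≠ i) := by
  ext e
  simp only [setStrat, mem_filter, mem_union, mem_univ, true_and]
  tauto

lemma setStrat_image_filter (g : Finset (Dyad N)) (i : Fin N) :
    setStrat g i ((g.filter (fun e => e.val.1 = i)).image (fun e => e.val.2)) = g := by
  ext e
  simp only [setStrat, mem_union, mem_filter, mem_image, mem_univ, true_and]
  constructor
  · rintro (⟨he, _⟩ | ⟨hi, f, ⟨hf, hfi⟩, hfe⟩)
    · exact he
    · rwa [← Subtype.ext (Prod.ext (hfi.trans hi.symm) hfe)]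
  · intro he
    by_cases hi : e.val.1 = i
    · exact Or.inr ⟨hi, e, ⟨he, hi⟩, rfl⟩
    · exact Or.inl ⟨he, hi⟩

theorem isPotential_iff_forall_eq_filter (U : Fin N → Finset (Dyad N) → ℝ)
    (Φ : Finset (Dyad N) → ℝ) :
    IsPotential U Φ ↔ ∀ i g, (U i - Φ) g = (U i - Φ) (g.filter (fun e => e.val.1 ≠ i)) := by
  constructor
  · intro hΦ i g
    have := hΦ i g ((g.filter (fun e => e.val.1 = i)).image (fun e => e.val.2)) ∅
    rw [setStrat_image_filter, setStrat_empty] at this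
    simp only [Pi.sub_apply]
    linarith
  · intro h i g s s'
    have hs := h i (setStrat g i s)
    have hs' := h i (setStrat g i s')
    simp only [filter_setStrat, Pi.sub_apply] at hs hs'
    linarith

theorem isPotential_iff_mobiusV_eq (U : Fin N → Finset (Dyad N) → ℝ)
    (Φ : Finset (Dyad N) → ℝ) :
    IsPotential U Φ ↔ ∀ i g, IsSource i g → mobiusV U i g = mobius Φ g := by
  simp only [isPotential_iff_forall_eq_filter, forall_eq_filter_iff_mobius_eq_zero,
    ← isSource_iff_exists_not_ne, mobius_sub, sub_eq_zero]
  rfl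

theorem isPotential_sum_powerset {U : Fin N → Finset (Dyad N) → ℝ} {V₀ : Finset (Dyad N) → ℝ}
    (hV₀ : ∀ g i, IsSource i g → V₀ g = mobiusV U i g) :
    IsPotential U (fun g => ∑ g' ∈ g.powerset, V₀ g') :=
  (isPotential_iff_mobiusV_eq U _).mpr fun i g hi => by rw [mobius_sum_powerset, hV₀ g i hi]

end Game

theorem stmt_4_general (N : ℕ) (U : Fin N → Finset (Dyad N) → ℝ) :
    ((∃ Φ : Finset (Dyad N) → ℝ, IsPotential U Φ) ↔
      (∀ g : Finset (Dyad N), g.Nonempty → ∀ i j : Fin N,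
        IsSource i g → IsSource j g → mobiusV U i g = mobiusV U j g)) ∧
    ((∀ g : Finset (Dyad N), g.Nonempty → ∀ i j : Fin N,
        IsSource i g → IsSource j g → mobiusV U i g = mobiusV U j g) →
      ∀ V₀ : Finset (Dyad N) → ℝ,
        (∀ g : Finset (Dyad N), g.Nonempty → ∀ i : Fin N, IsSource i g →
          V₀ g = mobiusV U i g) →
        IsPotential U (fun g => ∑ g' ∈ g.powerset, V₀ g')) := by
  refine ⟨⟨?_, fun hV => ?_⟩,
    fun _ V₀ hV₀ => isPotential_sum_powerset fun g i hi => hV₀ g hi.nonempty i hi⟩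
  · rintro ⟨Φ, hΦ⟩ g _ i j hi hj
    rw [isPotential_iff_mobiusV_eq] at hΦ
    rw [hΦ i g hi, hΦ j g hj]
  · refine ⟨_, isPotential_sum_powerset
      (V₀ := fun g => if hg : g.Nonempty then mobiusV U hg.choose.val.1 g else 0) fun g i hi => ?_⟩
    rw [dif_pos hi.nonempty]
    exact hV g hi.nonempty _ i ⟨_, hi.nonempty.choose_spec, rfl⟩ hi

/-- **Proposition 2 (structure-value characterization of potential games).**
The game is a potential game iff for every nonempty structure all source nodes assign it
the same value. In that case, for any `V₀` agreeing with this common value,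
`Φ(g) = ∑_{g' ⊆ g} V₀(g')` is a potential of the game. -/
theorem stmt_4 (N : ℕ) (hN : 2 ≤ N) (U : Fin N → Finset (Dyad N) → ℝ) :
    ((∃ Φ : Finset (Dyad N) → ℝ, IsPotential U Φ) ↔
      (∀ g : Finset (Dyad N), g.Nonempty → ∀ i j : Fin N,
        IsSource i g → IsSource j g → mobiusV U i g = mobiusV U j g)) ∧
    ((∀ g : Finset (Dyad N), g.Nonempty → ∀ i j : Fin N,
        IsSource i g → IsSource j g → mobiusV U i g = mobiusV U j g) →
      ∀ V₀ : Finset (Dyad N) → ℝ,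
        (∀ g : Finset (Dyad N), g.Nonempty → ∀ i : Fin N, IsSource i g →
          V₀ g = mobiusV U i g) →
        IsPotential U (fun g => ∑ g' ∈ g.powerset, V₀ g')) :=
  stmt_4_general N U
end

section
/- Let m be a finite directed graph on vertex set {1,...,n} with edge set E ⊆ {(i,j) : i ≠ j} having e = |E| ≥ 1 edges, and for each edge (i,j) ∈ E let f_{ij} : [0,1]² → [0,1] be measurable. Then ∫_{[0,1]^n} ∏_{(i,j)∈E} f_{ij}(x_i, x_j) dx_1⋯dx_n ≤ ∏_{(i,j)∈E} ‖f_{ij}‖_{L^e([0,1]²)}, where ‖f‖_{L^e} = (∫_{[0,1]²} f(x,y)^e dx dy)^{1/e}. -/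
/-!
Hölder's inequality with the `e` exponents all equal to `e` bounds the integral of the product
by the product of the `L^e` norms of `x ↦ f_{ij}(x_i, x_j)` on the cube. The coordinates of a
uniform point of the cube are independent uniform variables, so for `i ≠ j` the pair
`(x_i, x_j)` is uniform on the square, and each of these norms is `‖f_{ij}‖_{L^e([0,1]²)}`.
-/

open MeasureTheory

def unitCube (n : ℕ) : Set (Fin n → ℝ) :=
  Set.univ.pi fun _ => Set.Icc (0 : ℝ) 1

def unitSquare : Set (ℝ × ℝ) :=
  (Set.Icc (0 : ℝ) 1) ×ˢ (Set.Icc (0 : ℝ) 1)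

open ProbabilityTheory Finset

theorem MeasureTheory.MeasurePreserving.integral_comp_of_aestronglyMeasurable
    {α β G : Type*} [MeasurableSpace α] [MeasurableSpace β] [NormedAddCommGroup G]
    [NormedSpace ℝ G] {μ : Measure α} {ν : Measure β} {f : α → β}
    (hf : MeasurePreserving f μ ν) {g : β → G} (hg : AEStronglyMeasurable g ν) :
    ∫ x, g (f x) ∂μ = ∫ y, g y ∂ν := by
  rw [← hf.map_eq] at hg ⊢
  exact (integral_map hf.measurable.aemeasurable hg).symm

theorem measurePreserving_eval_pair {ι : Type*} [Fintype ι] {Ω : ι → Type*}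
    [∀ i, MeasurableSpace (Ω i)] (μ : ∀ i, Measure (Ω i)) [∀ i, IsProbabilityMeasure (μ i)]
    {i j : ι} (hij : i ≠ j) :
    MeasurePreserving (fun x => (x i, x j)) (Measure.pi μ) ((μ i).prod (μ j)) := by
  have hindep : IndepFun (fun x : ∀ k, Ω k => x i) (fun x => x j) (Measure.pi μ) :=
    (iIndepFun_pi (X := fun _ => id) fun _ => aemeasurable_id).indepFun hij
  refine ⟨by fun_prop, ?_⟩
  rw [hindep.map_prod_eq_prod_map_map (measurable_pi_apply i).aemeasurable
      (measurable_pi_apply j).aemeasurable,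
    (measurePreserving_eval μ i).map_eq, (measurePreserving_eval μ j).map_eq]

theorem volume_restrict_unitCube (n : ℕ) :
    volume.restrict (unitCube n) =
      Measure.pi fun _ : Fin n => volume.restrict (Set.Icc (0 : ℝ) 1) := by
  refine (Measure.pi_eq fun s hs => ?_).symm
  rw [Measure.restrict_apply (MeasurableSet.univ_pi hs), unitCube, ← Set.pi_inter_distrib,
    volume_pi, Measure.pi_pi]
  exact prod_congr rfl fun i _ => (Measure.restrict_apply (hs i)).symm

theorem volume_restrict_unitSquare :
    volume.restrict unitSquare =
      (volume.restrict (Set.Icc (0 : ℝ) 1)).prod (volume.restrict (Set.Icc (0 : ℝ) 1)) := by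
  rw [Measure.prod_restrict, unitSquare, ← Measure.volume_eq_prod]

theorem measurePreserving_unitCube_pair {n : ℕ} {i j : Fin n} (hij : i ≠ j) :
    MeasurePreserving (fun x : Fin n → ℝ => (x i, x j)) (volume.restrict (unitCube n))
      (volume.restrict unitSquare) := by
  have : IsProbabilityMeasure (volume.restrict (Set.Icc (0 : ℝ) 1)) := ⟨by simp⟩
  rw [volume_restrict_unitCube, volume_restrict_unitSquare]
  exact measurePreserving_eval_pair _ hij

theorem ENNReal.lintegral_prod_le_prod_lintegral_pow_card {α ι : Type*} [MeasurableSpace α]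
    {μ : Measure α} {s : Finset ι} (hs : s.Nonempty) {g : ι → α → ENNReal}
    (hg : ∀ i ∈ s, AEMeasurable (g i) μ) :
    ∫⁻ a, ∏ i ∈ s, g i a ∂μ ≤ ∏ i ∈ s, (∫⁻ a, g i a ^ #s ∂μ) ^ (#s : ℝ)⁻¹ := by
  have hcard : (#s : ℝ) ≠ 0 := by simp [hs.ne_empty]
  have hroot (x : ENNReal) : (x ^ #s) ^ (#s : ℝ)⁻¹ = x := by
    rw [← ENNReal.rpow_natCast, ← ENNReal.rpow_mul, mul_inv_cancel₀ hcard, ENNReal.rpow_one]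
  simpa only [hroot] using ENNReal.lintegral_prod_norm_pow_le s
    (fun i hi => (hg i hi).pow_const #s) (p := fun _ => (#s : ℝ)⁻¹)
    (by simp [mul_inv_cancel₀ hcard]) (fun _ _ => by positivity)

theorem integral_prod_le_prod_integral_pow_card {α ι : Type*} [MeasurableSpace α]
    {μ : Measure α} {s : Finset ι} (hs : s.Nonempty) {g : ι → α → ℝ}
    (hg_nonneg : ∀ i ∈ s, ∀ a, 0 ≤ g i a) (hg_meas : ∀ i ∈ s, AEMeasurable (g i) μ)
    (hg_int : ∀ i ∈ s, Integrable (fun a => g i a ^ #s) μ) :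
    ∫ a, ∏ i ∈ s, g i a ∂μ ≤ ∏ i ∈ s, (∫ a, g i a ^ #s ∂μ) ^ (#s : ℝ)⁻¹ := by
  have hpow (i) (hi : i ∈ s) :
      ∫ a, g i a ^ #s ∂μ = (∫⁻ a, ENNReal.ofReal (g i a) ^ #s ∂μ).toReal := by
    rw [integral_eq_lintegral_of_nonneg_ae (.of_forall fun a => pow_nonneg (hg_nonneg i hi a) _)
      ((hg_meas i hi).pow_const _).aestronglyMeasurable]
    simp only [ENNReal.ofReal_pow (hg_nonneg i hi _)]
  have hfin (i) (hi : i ∈ s) : ∫⁻ a, ENNReal.ofReal (g i a) ^ #s ∂μ ≠ ⊤ := by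
    simpa only [ENNReal.ofReal_pow (hg_nonneg i hi _)] using (hg_int i hi).lintegral_lt_top.ne
  rw [integral_eq_lintegral_of_nonneg_ae
      (.of_forall fun a => prod_nonneg fun i hi => hg_nonneg i hi a)
      (s.aemeasurable_fun_prod hg_meas).aestronglyMeasurable,
    prod_congr rfl fun i hi => by rw [hpow i hi, ENNReal.toReal_rpow], ← ENNReal.toReal_prod]
  refine ENNReal.toReal_mono (ENNReal.prod_ne_top fun i hi => ?_) ?_
  · exact ENNReal.rpow_ne_top_of_nonneg (by positivity) (hfin i hi)
  · simpa only [ENNReal.ofReal_prod_of_nonneg fun i hi => hg_nonneg i hi _] using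
      ENNReal.lintegral_prod_le_prod_lintegral_pow_card hs fun i hi =>
        (hg_meas i hi).ennreal_ofReal

/-- **Graph-indexed Hölder inequality.** For a finite directed graph on `{1,…,n}` with
loopless edge set `E`, `e = |E| ≥ 1`, and measurable `f_{ij} : [0,1]² → [0,1]` for each
edge, `∫_{[0,1]^n} ∏_{(i,j)∈E} f_{ij}(x_i,x_j) dx ≤ ∏_{(i,j)∈E} ‖f_{ij}‖_{L^e([0,1]²)}`,
where `‖f‖_{L^e} = (∫_{[0,1]²} f(x,y)^e dx dy)^{1/e}`. -/
theorem stmt_10 (n : ℕ) (E : Finset (Fin n × Fin n)) (hloop : ∀ e ∈ E, e.1 ≠ e.2)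
    (hE : 1 ≤ E.card) (f : Fin n × Fin n → ℝ → ℝ → ℝ)
    (hmeas : ∀ e ∈ E, Measurable (Function.uncurry (f e)))
    (hrange : ∀ e ∈ E, ∀ x y, f e x y ∈ Set.Icc (0 : ℝ) 1) :
    (∫ x in unitCube n, ∏ e ∈ E, f e (x e.1) (x e.2)) ≤
      ∏ e ∈ E, (∫ p in unitSquare, (f e p.1 p.2) ^ E.card) ^ ((E.card : ℝ)⁻¹) := by
  have hpair (e) (he : e ∈ E) := measurePreserving_unitCube_pair (hloop e he)
  have hpow_meas (e) (he : e ∈ E) : Measurable fun p : ℝ × ℝ => f e p.1 p.2 ^ #E :=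
    (hmeas e he).pow_const _
  have hpow_int (e) (he : e ∈ E) :
      IntegrableOn (fun p : ℝ × ℝ => f e p.1 p.2 ^ #E) unitSquare :=
    Measure.integrableOn_of_bounded (isCompact_Icc.prod isCompact_Icc).measure_lt_top.ne
      (M := 1) (hpow_meas e he).aestronglyMeasurable <| .of_forall fun p => by
        obtain ⟨h0, h1⟩ := hrange e he p.1 p.2
        simpa [abs_of_nonneg h0] using pow_le_one₀ h0 h1
  calc _ ≤ ∏ e ∈ E, (∫ x in unitCube n, f e (x e.1) (x e.2) ^ #E) ^ (#E : ℝ)⁻¹ :=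
        integral_prod_le_prod_integral_pow_card (card_pos.mp hE)
          (fun e he _ => (hrange e he _ _).1)
          (fun e he => ((hmeas e he).comp (hpair e he).measurable).aemeasurable)
          (fun e he => (hpair e he).integrable_comp_of_integrable (hpow_int e he))
    _ = _ := prod_congr rfl fun e he => by
        rw [(hpair e he).integral_comp_of_aestronglyMeasurable
          (hpow_meas e he).aestronglyMeasurable]
end
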